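/- arXiv:1907.02148 — 10 statements merged into one kernel-verified Lean document; each statement's English description precedes it below -/
import Mathlib

section
/- Let a, b, c be nonzero squarefree pairwise coprime integers. The equation a·X₀² + b·X₁² + c·X₂² = 0 has a solution in integers (x₀, x₁, x₂) ≠ (0,0,0) if and only if the following conditions hold: a, b, c do not all have the same sign, and −b·c is a square modulo a, −a·c is a square modulo b, and −a·b is a square modulo c. -/
lemma qr_cond (a b c x₀ x₁ x₂ : ℤ) (hsa : Squarefree a)
    (hab : IsCoprime a b) (hac : IsCoprime a c)
    (hprim : ∀ p : ℕ, p.Prime → ¬((p:ℤ) ∣ x₀ ∧ (p:ℤ) ∣ x₁ ∧ (p:ℤ) ∣ x₂))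
    (heq : a*x₀^2 + b*x₁^2 + c*x₂^2 = 0) :
    ∃ t : ℤ, a ∣ t^2 + b*c := by
  have hco : IsCoprime a x₁ := by
    rw [Int.isCoprime_iff_gcd_eq_one]
    by_contra hne
    obtain ⟨p, hp, hpd⟩ := Nat.exists_prime_and_dvd hne
    have hpa : (p:ℤ) ∣ a := dvd_trans (Int.natCast_dvd_natCast.mpr hpd) (Int.gcd_dvd_left _ _)
    have hpx₁ : (p:ℤ) ∣ x₁ := dvd_trans (Int.natCast_dvd_natCast.mpr hpd) (Int.gcd_dvd_right _ _)
    have hpp : Prime (p:ℤ) := Nat.prime_iff_prime_int.mp hp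
    have h4 : (p:ℤ) ∣ c*x₂^2 := by
      rw [show c*x₂^2 = a*(-(x₀^2)) + x₁*(-(b*x₁)) by linear_combination heq]
      exact dvd_add (hpa.mul_right _) (hpx₁.mul_right _)
    have hpc : ¬ (p:ℤ) ∣ c := fun h => hpp.not_unit (hac.isUnit_of_dvd' hpa h)
    have hpx₂ : (p:ℤ) ∣ x₂ := by
      rcases hpp.dvd_mul.mp h4 with h | h
      · exact absurd h hpc
      · exact hpp.dvd_of_dvd_pow h
    have h5 : (p:ℤ)*(p:ℤ) ∣ a*x₀^2 := by
      rw [show a*x₀^2 = x₁^2*(-b) + x₂^2*(-c) by linear_combination heq]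
      refine dvd_add (Dvd.dvd.mul_right ?_ _) (Dvd.dvd.mul_right ?_ _)
      · rw [show (x₁:ℤ)^2 = x₁*x₁ by ring]; exact mul_dvd_mul hpx₁ hpx₁
      · rw [show (x₂:ℤ)^2 = x₂*x₂ by ring]; exact mul_dvd_mul hpx₂ hpx₂
    obtain ⟨a', rfl⟩ := hpa
    have hpa' : ¬ (p:ℤ) ∣ a' := by
      intro h
      obtain ⟨a'', rfl⟩ := h
      exact hpp.not_unit (hsa (p:ℤ) ⟨a'', by ring⟩)
    have h6 : (p:ℤ) ∣ a'*x₀^2 := by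
      exact (mul_dvd_mul_iff_left hpp.ne_zero).mp
        (by rwa [show (p:ℤ)*a'*x₀^2 = (p:ℤ)*(a'*x₀^2) by ring] at h5)
    have hpx₀ : (p:ℤ) ∣ x₀ := by
      rcases hpp.dvd_mul.mp h6 with h | h
      · exact absurd h hpa'
      · exact hpp.dvd_of_dvd_pow h
    exact hprim p hp ⟨hpx₀, hpx₁, hpx₂⟩
  obtain ⟨m, n, hmn⟩ := hco
  refine ⟨n*c*x₂, ?_⟩
  have h2 : a ∣ b*x₁^2 + c*x₂^2 := ⟨-(x₀^2), by linear_combination heq⟩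
  have h1 : a ∣ n*x₁ - 1 := ⟨-m, by linear_combination hmn⟩
  rw [show (n*c*x₂)^2 + b*c = n^2*c*(b*x₁^2 + c*x₂^2) - b*c*((n*x₁-1)*(n*x₁+1)) by ring]
  exact dvd_sub (h2.mul_left _) ((h1.mul_right _).mul_left _)
lemma sqf_eq_one {n x : ℤ} (h : Squarefree n) (hx : x^2 = n) : n = 1 := by
  have : IsUnit x := h x ⟨1, by rw [← hx]; ring⟩
  rcases Int.isUnit_iff.mp this with h1 | h1 <;> simp [h1] at hx <;> omega

lemma sqf_neg {a : ℤ} (h : Squarefree a) : Squarefree (-a) := fun d hd => h d (dvd_neg.mp hd)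

lemma crt2 {a b : ℤ} (h : IsCoprime a b) (r s : ℤ) : ∃ x, a ∣ x - r ∧ b ∣ x - s := by
  obtain ⟨u, v, huv⟩ := h
  exact ⟨s*(u*a) + r*(v*b), ⟨u*(s-r), by linear_combination (r : ℤ) * huv⟩,
    ⟨v*(r-s), by linear_combination (s : ℤ) * huv⟩⟩

lemma crt3 {a b c : ℤ} (hab : IsCoprime a b) (hac : IsCoprime a c) (hbc : IsCoprime b c)
    (r s t : ℤ) : ∃ x, a ∣ x - r ∧ b ∣ x - s ∧ c ∣ x - t := by
  obtain ⟨x1, h1a, h1b⟩ := crt2 hab r s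
  obtain ⟨x, hx1, hxc⟩ := crt2 (hac.mul_left hbc) x1 t
  refine ⟨x, ?_, ?_, hxc⟩
  · have := dvd_add ((dvd_mul_right a b).trans hx1) h1a
    rwa [show x - x1 + (x1 - r) = x - r by ring] at this
  · have := dvd_add ((dvd_mul_left b a).trans hx1) h1b
    rwa [show x - x1 + (x1 - s) = x - s by ring] at this

lemma inv_mod {a b : ℤ} (h : IsCoprime a b) : ∃ u, a ∣ u*b - 1 := by
  obtain ⟨m, n, hmn⟩ := h
  exact ⟨n, ⟨-m, by linear_combination hmn⟩⟩

-- modulus-wise factorization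
lemma mod_fact {a b c u t : ℤ} (h1 : a ∣ u*b - 1) (h2 : a ∣ t^2 + b*c) (x y z L M : ℤ)
    (hL : a ∣ L - (u*b*y + u*t*z)) (hM : a ∣ M - (b*y - t*z)) :
    a ∣ (a*x^2 + b*y^2 + c*z^2) - L*M := by
  obtain ⟨e, he⟩ := h1
  obtain ⟨f, hf⟩ := h2
  have d1 : a ∣ (a*x^2 + b*y^2 + c*z^2) - (u*b*y + u*t*z)*(b*y - t*z) :=
    ⟨x^2 - b*y^2*e + z^2*(u*f - c*e), by linear_combination (-(b*y^2))*he + z^2*(u*hf - c*he)⟩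
  have := dvd_sub d1 (dvd_add (hL.mul_right M) (hM.mul_left (u*b*y + u*t*z)))
  rwa [show (a*x^2 + b*y^2 + c*z^2) - (u*b*y + u*t*z)*(b*y - t*z) -
      ((L - (u*b*y + u*t*z))*M + (u*b*y + u*t*z)*(M - (b*y - t*z)))
      = (a*x^2 + b*y^2 + c*z^2) - L*M by ring] at this
lemma coord_bound {n i i' : ℕ} (hi : i ≤ Nat.sqrt n) (hi' : i' ≤ Nat.sqrt n) :
    ((i:ℤ) - (i':ℕ))^2 ≤ (n:ℤ) := by
  have h : (Nat.sqrt n)^2 ≤ n := Nat.sqrt_le' n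
  calc ((i:ℤ) - (i':ℕ))^2 ≤ ((Nat.sqrt n : ℕ):ℤ)^2 :=
        sq_le_sq' (by push_cast; omega) (by push_cast; omega)
    _ ≤ (n:ℤ) := by exact_mod_cast h

lemma pigeon (na nb nc : ℕ) (ha : 0 < na) (hb : 0 < nb) (hc : 0 < nc) (α β γ : ℤ) :
    ∃ x y z : ℤ, ¬(x = 0 ∧ y = 0 ∧ z = 0) ∧ x^2 ≤ ((nb*nc : ℕ) : ℤ) ∧ y^2 ≤ ((na*nc : ℕ) : ℤ) ∧
      z^2 ≤ ((na*nb : ℕ) : ℤ) ∧ ((na*nb*nc : ℕ) : ℤ) ∣ α*x + β*y + γ*z := by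
  set p := Nat.sqrt (nb*nc) with hp
  set q := Nat.sqrt (na*nc) with hq
  set r := Nat.sqrt (na*nb) with hr
  set M := na*nb*nc with hM
  haveI : NeZero M := ⟨by positivity⟩
  have hcard : Fintype.card (ZMod M) < Fintype.card (Fin (p+1) × Fin (q+1) × Fin (r+1)) := by
    simp only [ZMod.card, Fintype.card_prod, Fintype.card_fin]
    have h1 : (nb*nc) < (p+1)^2 := Nat.lt_succ_sqrt' _
    have h2 : (na*nc) < (q+1)^2 := Nat.lt_succ_sqrt' _
    have h3 : (na*nb) < (r+1)^2 := Nat.lt_succ_sqrt' _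
    have hsq : M^2 < ((p+1)*((q+1)*(r+1)))^2 := by
      calc M^2 = (nb*nc) * ((na*nc) * (na*nb)) := by rw [hM]; ring
      _ < (p+1)^2 * ((q+1)^2 * (r+1)^2) := by
          apply Nat.mul_lt_mul_of_lt_of_le h1 (Nat.mul_le_mul h2.le h3.le) (by positivity)
      _ = ((p+1)*((q+1)*(r+1)))^2 := by ring
    exact lt_of_pow_lt_pow_left₀ 2 (by positivity) hsq
  obtain ⟨⟨i, j, k⟩, ⟨i', j', k'⟩, hne, heq⟩ :=
    Fintype.exists_ne_map_eq_of_card_lt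
      (fun v : Fin (p+1) × Fin (q+1) × Fin (r+1) =>
        (α * (v.1 : ℕ) + β * (v.2.1 : ℕ) + γ * (v.2.2 : ℕ) : ZMod M)) hcard
  refine ⟨(i:ℕ) - (i':ℕ), (j:ℕ) - (j':ℕ), (k:ℕ) - (k':ℕ), ?_,
    coord_bound (Nat.lt_succ_iff.mp i.isLt) (Nat.lt_succ_iff.mp i'.isLt),
    coord_bound (Nat.lt_succ_iff.mp j.isLt) (Nat.lt_succ_iff.mp j'.isLt),
    coord_bound (Nat.lt_succ_iff.mp k.isLt) (Nat.lt_succ_iff.mp k'.isLt), ?_⟩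
  · rintro ⟨h1, h2, h3⟩
    apply hne
    have e1 : (i:ℕ) = (i':ℕ) := by omega
    have e2 : (j:ℕ) = (j':ℕ) := by omega
    have e3 : (k:ℕ) = (k':ℕ) := by omega
    simp [Prod.ext_iff, Fin.ext_iff, e1, e2, e3]
  · have h0 : ((α * ((i:ℕ) - (i':ℕ)) + β * ((j:ℕ) - (j':ℕ)) + γ * ((k:ℕ) - (k':ℕ)) : ℤ) : ZMod M) = 0 := by
      push_cast
      rw [show ((α:ZMod M) * ((i:ℕ) - (i':ℕ)) + (β:ZMod M) * ((j:ℕ) - (j':ℕ)) + (γ:ZMod M) * ((k:ℕ) - (k':ℕ)))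
        = ((α:ZMod M) * (i:ℕ) + (β:ZMod M) * (j:ℕ) + (γ:ZMod M) * (k:ℕ))
          - ((α:ZMod M) * (i':ℕ) + (β:ZMod M) * (j':ℕ) + (γ:ZMod M) * (k':ℕ)) by ring]
      rw [show ((α:ZMod M) * (i:ℕ) + (β:ZMod M) * (j:ℕ) + (γ:ZMod M) * (k:ℕ))
        = ((α:ZMod M) * (i':ℕ) + (β:ZMod M) * (j':ℕ) + (γ:ZMod M) * (k':ℕ)) from ?_]
      · ring
      · exact_mod_cast heq
    exact (ZMod.intCast_zmod_eq_zero_iff_dvd _ _).mp h0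
lemma lin_dvd {m A B C r s t : ℤ} (hA : m ∣ A - r) (hB : m ∣ B - s) (hC : m ∣ C - t)
    (x y z : ℤ) : m ∣ (A*x+B*y+C*z) - (r*x+s*y+t*z) := by
  rw [show (A*x+B*y+C*z) - (r*x+s*y+t*z) = (A-r)*x + (B-s)*y + (C-t)*z by ring]
  exact dvd_add (dvd_add (hA.mul_right x) (hB.mul_right y)) (hC.mul_right z)

lemma key (a b c : ℤ) (ha : 0 < a) (hb : b < 0) (hc : c < 0)
    (hsa : Squarefree a) (hsb : Squarefree b) (hsc : Squarefree c)
    (hab : IsCoprime a b) (hac : IsCoprime a c) (hbc : IsCoprime b c)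
    (h1 : ∃ t : ℤ, a ∣ t^2 + b*c) (h2 : ∃ t : ℤ, b ∣ t^2 + a*c)
    (h3 : ∃ t : ℤ, c ∣ t^2 + a*b) :
    ∃ x y z : ℤ, ¬(x = 0 ∧ y = 0 ∧ z = 0) ∧ a*x^2 + b*y^2 + c*z^2 = 0 := by
  by_cases hbc1 : b = -1 ∧ c = -1
  · -- sum of two squares case
    obtain ⟨rfl, rfl⟩ : b = -1 ∧ c = -1 := hbc1
    obtain ⟨t, ht⟩ := h1
    set n := a.toNat with hn
    have hna : (n:ℤ) = a := Int.toNat_of_nonneg ha.le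
    have h0 : ((t^2 + 1 : ℤ) : ZMod n) = 0 := by
      rw [ZMod.intCast_zmod_eq_zero_iff_dvd, hna]
      simpa using ht
    push_cast at h0
    have hsq : IsSquare (-1 : ZMod n) := ⟨(t : ZMod n), by linear_combination -h0⟩
    obtain ⟨X, Y, hXY⟩ := Nat.eq_sq_add_sq_of_isSquare_mod_neg_one hsq
    refine ⟨1, X, Y, by simp, ?_⟩
    have : (n:ℤ) = (X:ℤ)^2 + (Y:ℤ)^2 := by exact_mod_cast hXY
    rw [hna] at this
    linear_combination this
  · by_cases hab1 : a = 1 ∧ b = -1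
    · obtain ⟨rfl, rfl⟩ := hab1
      exact ⟨1, 1, 0, by simp, by ring⟩
    · by_cases hac1 : a = 1 ∧ c = -1
      · obtain ⟨rfl, rfl⟩ := hac1
        exact ⟨1, 0, 1, by simp, by ring⟩
      · -- main case
        obtain ⟨t₁, ht₁⟩ := h1
        obtain ⟨t₂, ht₂⟩ := h2
        obtain ⟨t₃, ht₃⟩ := h3
        obtain ⟨u, hu⟩ := inv_mod hab
        obtain ⟨v, hv⟩ := inv_mod hab.symm
        obtain ⟨w, hw⟩ := inv_mod hac.symm
        obtain ⟨α, hαa, hαb, hαc⟩ := crt3 hab hac hbc 0 (v*a) (w*a)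
        obtain ⟨β, hβa, hβb, hβc⟩ := crt3 hab hac hbc (u*b) 0 (w*t₃)
        obtain ⟨γ, hγa, hγb, hγc⟩ := crt3 hab hac hbc (u*t₁) (v*t₂) 0
        obtain ⟨α', hα'a, hα'b, hα'c⟩ := crt3 hab hac hbc 0 a a
        obtain ⟨β', hβ'a, hβ'b, hβ'c⟩ := crt3 hab hac hbc b 0 (-t₃)
        obtain ⟨γ', hγ'a, hγ'b, hγ'c⟩ := crt3 hab hac hbc (-t₁) (-t₂) 0
        have habc : ∀ x y z : ℤ, a*b*c ∣
            (a*x^2+b*y^2+c*z^2) - (α*x+β*y+γ*z)*(α'*x+β'*y+γ'*z) := by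
          intro x y z
          have da : a ∣ (a*x^2+b*y^2+c*z^2) - (α*x+β*y+γ*z)*(α'*x+β'*y+γ'*z) := by
            apply mod_fact hu ht₁ x y z
            · have := lin_dvd hαa hβa hγa x y z
              rwa [show (0*x + u*b*y + u*t₁*z) = u*b*y + u*t₁*z by ring] at this
            · have := lin_dvd hα'a hβ'a hγ'a x y z
              rwa [show (0*x + b*y + (-t₁)*z) = b*y - t₁*z by ring] at this
          have db : b ∣ (a*x^2+b*y^2+c*z^2) - (α*x+β*y+γ*z)*(α'*x+β'*y+γ'*z) := by
            have h := mod_fact (a := b) (b := a) (c := c) hv ht₂ y x z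
              (α*x+β*y+γ*z) (α'*x+β'*y+γ'*z) ?_ ?_
            · rwa [show (b*y^2 + a*x^2 + c*z^2) = a*x^2+b*y^2+c*z^2 by ring] at h
            · have := lin_dvd hαb hβb hγb x y z
              rwa [show (v*a*x + 0*y + v*t₂*z) = v*a*x + v*t₂*z by ring] at this
            · have := lin_dvd hα'b hβ'b hγ'b x y z
              rwa [show (a*x + 0*y + (-t₂)*z) = a*x - t₂*z by ring] at this
          have dc : c ∣ (a*x^2+b*y^2+c*z^2) - (α*x+β*y+γ*z)*(α'*x+β'*y+γ'*z) := by
            have h := mod_fact (a := c) (b := a) (c := b) hw ht₃ z x y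
              (α*x+β*y+γ*z) (α'*x+β'*y+γ'*z) ?_ ?_
            · rwa [show (c*z^2 + a*x^2 + b*y^2) = a*x^2+b*y^2+c*z^2 by ring] at h
            · have := lin_dvd hαc hβc hγc x y z
              rwa [show (w*a*x + w*t₃*y + 0*z) = w*a*x + w*t₃*y by ring] at this
            · have := lin_dvd hα'c hβ'c hγ'c x y z
              rwa [show (a*x + (-t₃)*y + 0*z) = a*x - t₃*y by ring] at this
          exact (hac.mul_left hbc).mul_dvd (hab.mul_dvd da db) dc
        -- pigeonhole
        set na := a.toNat
        set nb := (-b).toNat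
        set nc := (-c).toNat
        have hna : (na:ℤ) = a := Int.toNat_of_nonneg ha.le
        have hnb : (nb:ℤ) = -b := Int.toNat_of_nonneg (by linarith)
        have hnc : (nc:ℤ) = -c := Int.toNat_of_nonneg (by linarith)
        obtain ⟨x, y, z, hnz, hx2, hy2, hz2, hdvd⟩ := pigeon na nb nc
          (by omega) (by omega) (by omega) α β γ
        push_cast [hna, hnb, hnc] at hx2 hy2 hz2 hdvd
        replace hx2 : x^2 ≤ b*c := by linarith [hx2]
        replace hy2 : y^2 ≤ -(a*c) := by linarith [hy2]
        replace hz2 : z^2 ≤ -(a*b) := by linarith [hz2]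
        replace hdvd : a*b*c ∣ α*x + β*y + γ*z := by
          rwa [show a * -b * -c = a*b*c by ring] at hdvd
        have hm : 0 < a*b*c := by
          have : 0 < b*c := mul_pos_of_neg_of_neg hb hc
          rw [mul_assoc]; exact mul_pos ha this
        have hdvdf : a*b*c ∣ a*x^2+b*y^2+c*z^2 := by
          have := dvd_add (habc x y z) (hdvd.mul_right (α'*x+β'*y+γ'*z))
          rwa [sub_add_cancel] at this
        obtain ⟨k, hk⟩ := hdvdf
        have hA : 0 ≤ a*x^2 := mul_nonneg ha.le (sq_nonneg x)
        have hB : a*x^2 ≤ a*(b*c) := mul_le_mul_of_nonneg_left hx2 ha.le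
        have hC : b*(-(a*c)) ≤ b*y^2 := mul_le_mul_of_nonpos_left hy2 hb.le
        have hD : c*(-(a*b)) ≤ c*z^2 := mul_le_mul_of_nonpos_left hz2 hc.le
        have hE : b*y^2 ≤ 0 := by nlinarith [sq_nonneg y]
        have hF : c*z^2 ≤ 0 := by nlinarith [sq_nonneg z]
        have hk1 : k ≤ 1 := by nlinarith
        have hk2 : -2 ≤ k := by nlinarith
        interval_cases k
        · -- k = -2
          exfalso
          have e2 : b*y^2 = b*(-(a*c)) := by nlinarith
          have e2' : y^2 = -(a*c) := mul_left_cancel₀ hb.ne e2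
          have hsf : Squarefree (a*(-c)) :=
            squarefree_mul_iff.mpr ⟨hac.neg_right.isRelPrime, hsa, sqf_neg hsc⟩
          have := sqf_eq_one hsf (by linarith [e2'] : y^2 = a*(-c))
          rcases Int.eq_one_or_neg_one_of_mul_eq_one' this with ⟨h1', h2'⟩ | ⟨h1', h2'⟩
          · exact hac1 ⟨h1', by linarith⟩
          · linarith
        · -- k = -1
          have hzab : z^2 + a*b ≠ 0 := by
            intro h0
            have hsf : Squarefree (a*(-b)) :=
              squarefree_mul_iff.mpr ⟨hab.neg_right.isRelPrime, hsa, sqf_neg hsb⟩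
            have := sqf_eq_one hsf (by linarith : z^2 = a*(-b))
            rcases Int.eq_one_or_neg_one_of_mul_eq_one' this with ⟨h1', h2'⟩ | ⟨h1', h2'⟩
            · exact hab1 ⟨h1', by linarith⟩
            · linarith
          refine ⟨x*z + b*y, y*z - a*x, z^2 + a*b, ?_, ?_⟩
          · rintro ⟨-, -, h0⟩; exact hzab h0
          · linear_combination (z^2 + a*b) * hk
        · -- k = 0
          exact ⟨x, y, z, hnz, by linarith [hk]⟩
        · -- k = 1
          exfalso
          have e1 : a*x^2 = a*(b*c) := by nlinarith
          have e1' : x^2 = b*c := mul_left_cancel₀ ha.ne' e1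
          have hsf : Squarefree (b*c) :=
            squarefree_mul_iff.mpr ⟨hbc.isRelPrime, hsb, hsc⟩
          have := sqf_eq_one hsf e1'
          rcases Int.eq_one_or_neg_one_of_mul_eq_one' this with ⟨h1', h2'⟩ | ⟨h1', h2'⟩
          · linarith
          · exact hbc1 ⟨h1', h2'⟩

lemma sign_forced {a b c y0 y1 y2 : ℤ} (ha : 0 < a) (hb : 0 < b) (hc : 0 < c)
    (heq : a*y0^2 + b*y1^2 + c*y2^2 = 0) : y0 = 0 ∧ y1 = 0 ∧ y2 = 0 := by
  have k0 : y0 = 0 := by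
    by_contra h
    have h2 : 0 < y0^2 := by positivity
    nlinarith [mul_nonneg hb.le (sq_nonneg y1), mul_nonneg hc.le (sq_nonneg y2), mul_pos ha h2]
  have k1 : y1 = 0 := by
    by_contra h
    have h2 : 0 < y1^2 := by positivity
    nlinarith [mul_nonneg ha.le (sq_nonneg y0), mul_nonneg hc.le (sq_nonneg y2), mul_pos hb h2]
  have k2 : y2 = 0 := by
    by_contra h
    have h2 : 0 < y2^2 := by positivity
    nlinarith [mul_nonneg ha.le (sq_nonneg y0), mul_nonneg hb.le (sq_nonneg y1), mul_pos hc h2]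
  exact ⟨k0, k1, k2⟩

/-- **Legendre's criterion** for the solvability of the ternary diagonal quadratic
form `a·X₀² + b·X₁² + c·X₂² = 0` in integers, for nonzero squarefree pairwise
coprime integer coefficients `a`, `b`, `c`. -/
theorem legendre_criterion (a b c : ℤ) (ha : a ≠ 0) (hb : b ≠ 0) (hc : c ≠ 0)
    (hsa : Squarefree a) (hsb : Squarefree b) (hsc : Squarefree c)
    (hab : IsCoprime a b) (hac : IsCoprime a c) (hbc : IsCoprime b c) :
    (∃ x₀ x₁ x₂ : ℤ, (x₀, x₁, x₂) ≠ (0, 0, 0) ∧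
        a * x₀ ^ 2 + b * x₁ ^ 2 + c * x₂ ^ 2 = 0) ↔
      (¬ ((0 < a ∧ 0 < b ∧ 0 < c) ∨ (a < 0 ∧ b < 0 ∧ c < 0)) ∧
        (∃ t : ℤ, t ^ 2 ≡ -(b * c) [ZMOD a]) ∧
        (∃ t : ℤ, t ^ 2 ≡ -(a * c) [ZMOD b]) ∧
        (∃ t : ℤ, t ^ 2 ≡ -(a * b) [ZMOD c])) := by
  constructor
  · rintro ⟨x₀, x₁, x₂, hnz0, heq⟩
    have hnz : ¬(x₀ = 0 ∧ x₁ = 0 ∧ x₂ = 0) := by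
      intro ⟨e1, e2, e3⟩; exact hnz0 (by simp [e1, e2, e3])
    have hdx₀ : (↑(Int.gcd x₀ (Int.gcd x₁ x₂)):ℤ) ∣ x₀ := Int.gcd_dvd_left _ _
    have hdx₁ : (↑(Int.gcd x₀ (Int.gcd x₁ x₂)):ℤ) ∣ x₁ := by
      refine (Int.gcd_dvd_right _ _).trans ?_
      exact_mod_cast (Int.gcd_dvd_left _ _ : (↑(Int.gcd x₁ x₂) : ℤ) ∣ x₁)
    have hdx₂ : (↑(Int.gcd x₀ (Int.gcd x₁ x₂)):ℤ) ∣ x₂ := by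
      refine (Int.gcd_dvd_right _ _).trans ?_
      exact_mod_cast (Int.gcd_dvd_right _ _ : (↑(Int.gcd x₁ x₂) : ℤ) ∣ x₂)
    obtain ⟨y₀, hy₀⟩ := hdx₀
    obtain ⟨y₁, hy₁⟩ := hdx₁
    obtain ⟨y₂, hy₂⟩ := hdx₂
    set d : ℕ := Int.gcd x₀ (Int.gcd x₁ x₂) with hd
    clear_value d
    have hd0 : d ≠ 0 := by
      intro h
      rw [hd] at h
      have h1 := Int.gcd_eq_zero_iff.mp h
      have h2 := Int.gcd_eq_zero_iff.mp (by exact_mod_cast h1.2)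
      exact hnz ⟨h1.1, h2.1, h2.2⟩
    have hdz : ((d:ℤ))^2 ≠ 0 := by positivity
    have heq' : a*y₀^2 + b*y₁^2 + c*y₂^2 = 0 := by
      have heq2 := heq
      rw [hy₀, hy₁, hy₂] at heq2
      have h0 : ((d:ℤ))^2 * (a*y₀^2 + b*y₁^2 + c*y₂^2) = 0 := by linear_combination heq2
      exact (mul_eq_zero.mp h0).resolve_left hdz
    have hprim : ∀ p : ℕ, p.Prime → ¬((p:ℤ) ∣ y₀ ∧ (p:ℤ) ∣ y₁ ∧ (p:ℤ) ∣ y₂) := by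
      rintro p hp ⟨⟨z₀, hz₀⟩, ⟨z₁, hz₁⟩, ⟨z₂, hz₂⟩⟩
      have hdp : ((d*p : ℕ):ℤ) ∣ ((Int.gcd x₀ (Int.gcd x₁ x₂) : ℕ):ℤ) :=
        Int.dvd_coe_gcd ⟨z₀, by rw [hy₀, hz₀]; push_cast; ring⟩
          (Int.dvd_coe_gcd ⟨z₁, by rw [hy₁, hz₁]; push_cast; ring⟩
            ⟨z₂, by rw [hy₂, hz₂]; push_cast; ring⟩)
      rw [← hd] at hdp
      have h1 := Int.natCast_dvd_natCast.mp hdp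
      have h2 := Nat.le_of_dvd (Nat.pos_of_ne_zero hd0) h1
      nlinarith [hp.one_lt, Nat.pos_of_ne_zero hd0]
    have hdvd1 : ∃ t : ℤ, a ∣ t^2 + b*c := qr_cond a b c y₀ y₁ y₂ hsa hab hac hprim heq'
    have hdvd2 : ∃ t : ℤ, b ∣ t^2 + a*c :=
      qr_cond b a c y₁ y₀ y₂ hsb hab.symm hbc
        (fun p hp h => hprim p hp ⟨h.2.1, h.1, h.2.2⟩) (by linear_combination heq')
    have hdvd3 : ∃ t : ℤ, c ∣ t^2 + a*b :=
      qr_cond c a b y₂ y₀ y₁ hsc hac.symm hbc.symm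
        (fun p hp h => hprim p hp ⟨h.2.1, h.2.2, h.1⟩) (by linear_combination heq')
    refine ⟨?_, ?_, ?_, ?_⟩
    · have hnzy : ¬(y₀ = 0 ∧ y₁ = 0 ∧ y₂ = 0) := by
        rintro ⟨e1, e2, e3⟩
        refine hnz ⟨?_, ?_, ?_⟩
        · rw [hy₀, e1]; ring
        · rw [hy₁, e2]; ring
        · rw [hy₂, e3]; ring
      rintro (⟨ha1, hb1, hc1⟩ | ⟨ha1, hb1, hc1⟩)
      · exact hnzy (sign_forced ha1 hb1 hc1 heq')
      · exact hnzy (sign_forced (neg_pos.mpr ha1) (neg_pos.mpr hb1) (neg_pos.mpr hc1)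
          (by linear_combination -heq'))
    · obtain ⟨t, ht⟩ := hdvd1
      refine ⟨t, Int.modEq_iff_dvd.mpr ?_⟩
      rw [show -(b*c) - t^2 = -(t^2 + b*c) by ring]
      exact dvd_neg.mpr ht
    · obtain ⟨t, ht⟩ := hdvd2
      refine ⟨t, Int.modEq_iff_dvd.mpr ?_⟩
      rw [show -(a*c) - t^2 = -(t^2 + a*c) by ring]
      exact dvd_neg.mpr ht
    · obtain ⟨t, ht⟩ := hdvd3
      refine ⟨t, Int.modEq_iff_dvd.mpr ?_⟩
      rw [show -(a*b) - t^2 = -(t^2 + a*b) by ring]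
      exact dvd_neg.mpr ht
  · rintro ⟨hsign, ⟨t1, ht1⟩, ⟨t2, ht2⟩, ⟨t3, ht3⟩⟩
    have H1 : ∃ t : ℤ, a ∣ t^2 + b*c := ⟨t1, by
      have := Int.ModEq.dvd ht1
      rwa [show -(b*c) - t1^2 = -(t1^2 + b*c) by ring, dvd_neg] at this⟩
    have H2 : ∃ t : ℤ, b ∣ t^2 + a*c := ⟨t2, by
      have := Int.ModEq.dvd ht2
      rwa [show -(a*c) - t2^2 = -(t2^2 + a*c) by ring, dvd_neg] at this⟩
    have H3 : ∃ t : ℤ, c ∣ t^2 + a*b := ⟨t3, by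
      have := Int.ModEq.dvd ht3
      rwa [show -(a*b) - t3^2 = -(t3^2 + a*b) by ring, dvd_neg] at this⟩
    have conv1 : ∀ {u v : ℤ}, (∃ t : ℤ, u ∣ t^2 + v) → ∀ w : ℤ, v = w → ∃ t : ℤ, u ∣ t^2 + w := by
      rintro u v ⟨t, ht⟩ w rfl; exact ⟨t, ht⟩
    have convneg : ∀ {u v : ℤ}, (∃ t : ℤ, u ∣ t^2 + v) → ∃ t : ℤ, -u ∣ t^2 + v := by
      rintro u v ⟨t, ht⟩; exact ⟨t, (neg_dvd).mpr ht⟩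
    have wrap : ∀ {x y z : ℤ}, ¬(x = 0 ∧ y = 0 ∧ z = 0) → ((x, y, z) : ℤ×ℤ×ℤ) ≠ (0,0,0) := by
      intro x y z h h'
      exact h (by simpa [Prod.ext_iff] using h')
    rcases ha.lt_or_gt with ha' | ha' <;> rcases hb.lt_or_gt with hb' | hb' <;>
      rcases hc.lt_or_gt with hc' | hc'
    · exact absurd (Or.inr ⟨ha', hb', hc'⟩) hsign
    · -- a<0 b<0 c>0 : key c a b
      obtain ⟨x, y, z, hnz, heq⟩ := key c a b hc' ha' hb' hsc hsa hsb hac.symm hbc.symm hab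
        H3 (conv1 H1 _ (mul_comm b c)) (conv1 H2 _ (mul_comm a c))
      exact ⟨y, z, x, wrap (fun h => hnz ⟨h.2.2, h.1, h.2.1⟩), by linear_combination heq⟩
    · -- a<0 b>0 c<0 : key b a c
      obtain ⟨x, y, z, hnz, heq⟩ := key b a c hb' ha' hc' hsb hsa hsc hab.symm hbc hac
        H2 H1 (conv1 H3 _ (mul_comm a b))
      exact ⟨y, x, z, wrap (fun h => hnz ⟨h.2.1, h.1, h.2.2⟩), by linear_combination heq⟩
    · -- a<0 b>0 c>0 : key (-a) (-b) (-c)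
      obtain ⟨x, y, z, hnz, heq⟩ := key (-a) (-b) (-c) (by linarith) (by linarith) (by linarith)
        (sqf_neg hsa) (sqf_neg hsb) (sqf_neg hsc)
        (hab.neg_left.neg_right) (hac.neg_left.neg_right) (hbc.neg_left.neg_right)
        (convneg (conv1 H1 _ (by ring))) (convneg (conv1 H2 _ (by ring)))
        (convneg (conv1 H3 _ (by ring)))
      exact ⟨x, y, z, wrap hnz, by linear_combination -heq⟩
    · -- a>0 b<0 c<0 : key a b c
      obtain ⟨x, y, z, hnz, heq⟩ := key a b c ha' hb' hc' hsa hsb hsc hab hac hbc H1 H2 H3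
      exact ⟨x, y, z, wrap hnz, heq⟩
    · -- a>0 b<0 c>0 : key (-b) (-a) (-c)
      obtain ⟨x, y, z, hnz, heq⟩ := key (-b) (-a) (-c) (by linarith) (by linarith) (by linarith)
        (sqf_neg hsb) (sqf_neg hsa) (sqf_neg hsc)
        (hab.symm.neg_left.neg_right) (hbc.neg_left.neg_right) (hac.neg_left.neg_right)
        (convneg (conv1 H2 _ (by ring))) (convneg (conv1 H1 _ (by ring)))
        (convneg (conv1 H3 _ (by ring)))
      exact ⟨y, x, z, wrap (fun h => hnz ⟨h.2.1, h.1, h.2.2⟩), by linear_combination -heq⟩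
    · -- a>0 b>0 c<0 : key (-c) (-a) (-b)
      obtain ⟨x, y, z, hnz, heq⟩ := key (-c) (-a) (-b) (by linarith) (by linarith) (by linarith)
        (sqf_neg hsc) (sqf_neg hsa) (sqf_neg hsb)
        (hac.symm.neg_left.neg_right) (hbc.symm.neg_left.neg_right) (hab.neg_left.neg_right)
        (convneg (conv1 H3 _ (by ring))) (convneg (conv1 H1 _ (by ring)))
        (convneg (conv1 H2 _ (by ring)))
      exact ⟨y, z, x, wrap (fun h => hnz ⟨h.2.2, h.1, h.2.1⟩), by linear_combination -heq⟩
    · exact absurd (Or.inl ⟨ha', hb', hc'⟩) hsign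
end

section
/- Let M, N be distinct nonzero rational numbers and let (x₀, x₁, x₂, x₃) be rational numbers satisfying x₀² + M·x₁² = x₂² and x₀² + N·x₁² = x₃². Define T = N·x₂ − M·x₃ + (M−N)·x₀, X = M·N·(x₃ − x₂), and Y = M·N·(M−N)·x₁. Then T·Y² = X·(X + T·M)·(X + T·N). -/
/-- The map `F(X₀,X₁,X₂,X₃) = (N·X₂ − M·X₃ + (M−N)·X₀, M·N·(X₃−X₂), M·N·(M−N)·X₁)`
sends points of the quadric intersection `Q_{M,N}` to points of the cubic
`E_{M,N} : T·Y² = X·(X+T·M)·(X+T·N)`. -/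
theorem F_maps_QMN_to_EMN (M N : ℚ) (hM : M ≠ 0) (hN : N ≠ 0) (hMN : M ≠ N)
    (x₀ x₁ x₂ x₃ : ℚ)
    (h₁ : x₀ ^ 2 + M * x₁ ^ 2 = x₂ ^ 2) (h₂ : x₀ ^ 2 + N * x₁ ^ 2 = x₃ ^ 2)
    (T X Y : ℚ)
    (hT : T = N * x₂ - M * x₃ + (M - N) * x₀)
    (hX : X = M * N * (x₃ - x₂))
    (hY : Y = M * N * (M - N) * x₁) :
    T * Y ^ 2 = X * (X + T * M) * (X + T * N) := by
  subst hT hX hY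
  linear_combination
    (-(M^2*N^4*x₃) + M^2*N^4*x₀ + 2*M^3*N^3*x₃ - 2*M^3*N^3*x₀ - M^4*N^2*x₃ + M^4*N^2*x₀) * h₁ +
    (M^2*N^4*x₂ - M^2*N^4*x₀ - 2*M^3*N^3*x₂ + 2*M^3*N^3*x₀ + M^4*N^2*x₂ - M^4*N^2*x₀) * h₂
end

section
/- Let M, N be distinct nonzero rational numbers and let (T, X, Y) be rational numbers satisfying T·Y² = X·(X + T·M)·(X + T·N). Define X₀ = −(X + M·T)·(Y² − M·(X + N·T)²), X₁ = 2·Y·(X + N·T)·(X + M·T), X₂ = −(X + M·T)·(Y² + M·(X + N·T)²), and X₃ = −(X + N·T)·(Y² + N·(X + M·T)²). Then X₀² + M·X₁² = X₂² and X₀² + N·X₁² = X₃². -/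
/-- The map `G(T,X,Y) = (−(X+MT)(Y²−M(X+NT)²), 2Y(X+NT)(X+MT),
−(X+MT)(Y²+M(X+NT)²), −(X+NT)(Y²+N(X+MT)²))` sends points of the cubic
`E_{M,N} : T·Y² = X·(X+T·M)·(X+T·N)` to points of the quadric intersection
`Q_{M,N} : X₀² + M·X₁² = X₂², X₀² + N·X₁² = X₃²`. -/
theorem G_maps_EMN_to_QMN (M N : ℚ) (hM : M ≠ 0) (hN : N ≠ 0) (hMN : M ≠ N)
    (T X Y : ℚ) (h : T * Y ^ 2 = X * (X + T * M) * (X + T * N))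
    (X₀ X₁ X₂ X₃ : ℚ)
    (hX₀ : X₀ = -(X + M * T) * (Y ^ 2 - M * (X + N * T) ^ 2))
    (hX₁ : X₁ = 2 * Y * (X + N * T) * (X + M * T))
    (hX₂ : X₂ = -(X + M * T) * (Y ^ 2 + M * (X + N * T) ^ 2))
    (hX₃ : X₃ = -(X + N * T) * (Y ^ 2 + N * (X + M * T) ^ 2)) :
    X₀ ^ 2 + M * X₁ ^ 2 = X₂ ^ 2 ∧ X₀ ^ 2 + N * X₁ ^ 2 = X₃ ^ 2 := by
  subst hX₀ hX₁ hX₂ hX₃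
  constructor
  · ring
  · linear_combination ((M - N) * (2 * X + (M + N) * T) * Y ^ 2 -
      (M - N) * (M * (X + N * T) + N * (X + M * T)) * (X + N * T) * (X + M * T)) * h
end

section
/- Let M, N be distinct nonzero rational numbers and let (T, X, Y) be rational numbers satisfying T·Y² = X·(X + T·M)·(X + T·N), with Y ≠ 0, X + M·T ≠ 0 and X + N·T ≠ 0. Let (X₀, X₁, X₂, X₃) = G(T,X,Y) where G(T,X,Y) = (−(X+MT)(Y²−M(X+NT)²), 2Y(X+NT)(X+MT), −(X+MT)(Y²+M(X+NT)²), −(X+NT)(Y²+N(X+MT)²)), and let (T', X', Y') = F(X₀,X₁,X₂,X₃) where F(X₀,X₁,X₂,X₃) = (N·X₂ − M·X₃ + (M−N)·X₀, M·N·(X₃−X₂), M·N·(M−N)·X₁). Then there exists a nonzero rational number λ such that T' = λ·T, X' = λ·X and Y' = λ·Y. -/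
/-- The composite `F ∘ G` is projectively the identity on the cubic
`E_{M,N} : T·Y² = X·(X+T·M)·(X+T·N)`, away from the degenerate locus. -/
theorem F_comp_G_is_identity (M N : ℚ) (hM : M ≠ 0) (hN : N ≠ 0) (hMN : M ≠ N)
    (T X Y : ℚ) (h : T * Y ^ 2 = X * (X + T * M) * (X + T * N))
    (hY : Y ≠ 0) (hXM : X + M * T ≠ 0) (hXN : X + N * T ≠ 0)
    (X₀ X₁ X₂ X₃ : ℚ)
    (hX₀ : X₀ = -(X + M * T) * (Y ^ 2 - M * (X + N * T) ^ 2))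
    (hX₁ : X₁ = 2 * Y * (X + N * T) * (X + M * T))
    (hX₂ : X₂ = -(X + M * T) * (Y ^ 2 + M * (X + N * T) ^ 2))
    (hX₃ : X₃ = -(X + N * T) * (Y ^ 2 + N * (X + M * T) ^ 2))
    (T' X' Y' : ℚ)
    (hT' : T' = N * X₂ - M * X₃ + (M - N) * X₀)
    (hX' : X' = M * N * (X₃ - X₂))
    (hY' : Y' = M * N * (M - N) * X₁) :
    ∃ lam : ℚ, lam ≠ 0 ∧ T' = lam * T ∧ X' = lam * X ∧ Y' = lam * Y := by
  subst hX₀ hX₁ hX₂ hX₃ hT' hX' hY'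
  refine ⟨2 * M * N * (M - N) * (X + N * T) * (X + M * T), ?_, ?_, ?_, ?_⟩
  · exact mul_ne_zero (mul_ne_zero (mul_ne_zero (mul_ne_zero
      (mul_ne_zero two_ne_zero hM) hN) (sub_ne_zero.mpr hMN)) hXN) hXM
  · linear_combination (-(M * (M - N))) * h
  · linear_combination (M * N * (M - N)) * h
  · ring
end

section
/- Let M, N be distinct nonzero rational numbers and let (x₀, x₁, x₂, x₃) be rational numbers satisfying x₀² + M·x₁² = x₂² and x₀² + N·x₁² = x₃². Let (T, X, Y) = F(x₀,x₁,x₂,x₃) where F(x₀,x₁,x₂,x₃) = (N·x₂ − M·x₃ + (M−N)·x₀, M·N·(x₃−x₂), M·N·(M−N)·x₁), and assume Y ≠ 0, X + M·T ≠ 0 and X + N·T ≠ 0. Let (x₀', x₁', x₂', x₃') = G(T,X,Y) where G(T,X,Y) = (−(X+MT)(Y²−M(X+NT)²), 2Y(X+NT)(X+MT), −(X+MT)(Y²+M(X+NT)²), −(X+NT)(Y²+N(X+MT)²)). Then there exists a nonzero rational number λ such that xᵢ' = λ·xᵢ for i = 0, 1, 2, 3. -/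
/-- The composite `G ∘ F` is projectively the identity on the quadric
intersection `Q_{M,N} : X₀² + M·X₁² = X₂², X₀² + N·X₁² = X₃²`, away from the
degenerate locus. -/
theorem G_comp_F_is_identity (M N : ℚ) (hM : M ≠ 0) (hN : N ≠ 0) (hMN : M ≠ N)
    (x₀ x₁ x₂ x₃ : ℚ)
    (h₁ : x₀ ^ 2 + M * x₁ ^ 2 = x₂ ^ 2) (h₂ : x₀ ^ 2 + N * x₁ ^ 2 = x₃ ^ 2)
    (T X Y : ℚ)
    (hT : T = N * x₂ - M * x₃ + (M - N) * x₀)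
    (hX : X = M * N * (x₃ - x₂))
    (hY : Y = M * N * (M - N) * x₁)
    (hY0 : Y ≠ 0) (hXM : X + M * T ≠ 0) (hXN : X + N * T ≠ 0)
    (x₀' x₁' x₂' x₃' : ℚ)
    (hx₀' : x₀' = -(X + M * T) * (Y ^ 2 - M * (X + N * T) ^ 2))
    (hx₁' : x₁' = 2 * Y * (X + N * T) * (X + M * T))
    (hx₂' : x₂' = -(X + M * T) * (Y ^ 2 + M * (X + N * T) ^ 2))
    (hx₃' : x₃' = -(X + N * T) * (Y ^ 2 + N * (X + M * T) ^ 2)) :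
    ∃ lam : ℚ, lam ≠ 0 ∧ x₀' = lam * x₀ ∧ x₁' = lam * x₁ ∧ x₂' = lam * x₂ ∧ x₃' = lam * x₃ := by
  subst hT hX hY hx₀' hx₁' hx₂' hx₃'
  have hMN' : M - N ≠ 0 := sub_ne_zero.mpr hMN
  have e2 : M * N * (x₃ - x₂) + N * (N * x₂ - M * x₃ + (M - N) * x₀)
      = N * (M - N) * (x₀ - x₂) := by ring
  have e3 : M * N * (x₃ - x₂) + M * (N * x₂ - M * x₃ + (M - N) * x₀)
      = M * (M - N) * (x₀ - x₃) := by ring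
  have h02 : x₀ - x₂ ≠ 0 := by
    intro h; apply hXN; rw [e2, h, mul_zero]
  have h03 : x₀ - x₃ ≠ 0 := by
    intro h; apply hXM; rw [e3, h, mul_zero]
  refine ⟨2 * M ^ 2 * N ^ 2 * (M - N) ^ 3 * (x₀ - x₂) * (x₀ - x₃), ?_, ?_, ?_, ?_, ?_⟩
  · positivity
  · linear_combination (-(M ^ 2 * N ^ 2 * (M - N) ^ 3 * (x₀ - x₃))) * h₁
  · ring
  · linear_combination (-(M ^ 2 * N ^ 2 * (M - N) ^ 3 * (x₀ - x₃))) * h₁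
  · linear_combination (-(M ^ 2 * N ^ 2 * (M - N) ^ 3 * (x₀ - x₂))) * h₂
end

section
/- Let e₁, e₂, e₃ be rational numbers, b₁, b₂ nonzero rational numbers, and let (x₀, x₁, x₂, x₃) be rational numbers with x₀ ≠ 0 satisfying b₁·x₁² − b₂·x₂² + (e₁−e₂)·x₀² = 0 and b₁·x₁² − b₁·b₂·x₃² + (e₁−e₃)·x₀² = 0. Set x = b₁·x₁²/x₀² + e₁ and y = b₁·b₂·x₁·x₂·x₃/x₀³. Then y² = (x−e₁)·(x−e₂)·(x−e₃). -/
/-- A rational point of the homogeneous space `Q_{e₁,e₂,e₃,b₁,b₂}` with `x₀ ≠ 0`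
yields a rational point of the elliptic curve `y² = (x−e₁)(x−e₂)(x−e₃)` via
`x = b₁x₁²/x₀² + e₁`, `y = b₁b₂x₁x₂x₃/x₀³`. -/
theorem homogeneous_space_to_curve (e₁ e₂ e₃ b₁ b₂ : ℚ)
    (hb₁ : b₁ ≠ 0) (hb₂ : b₂ ≠ 0)
    (x₀ x₁ x₂ x₃ : ℚ) (hx₀ : x₀ ≠ 0)
    (hQ₁ : b₁ * x₁ ^ 2 - b₂ * x₂ ^ 2 + (e₁ - e₂) * x₀ ^ 2 = 0)
    (hQ₂ : b₁ * x₁ ^ 2 - b₁ * b₂ * x₃ ^ 2 + (e₁ - e₃) * x₀ ^ 2 = 0)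
    (x y : ℚ)
    (hx : x = b₁ * x₁ ^ 2 / x₀ ^ 2 + e₁)
    (hy : y = b₁ * b₂ * x₁ * x₂ * x₃ / x₀ ^ 3) :
    y ^ 2 = (x - e₁) * (x - e₂) * (x - e₃) := by
  subst hx hy
  field_simp
  linear_combination (-(b₁*x₁^2)*(b₁*x₁^2+(e₁-e₃)*x₀^2)) * hQ₁ +
    (-(b₁*x₁^2)*(b₂*x₂^2)) * hQ₂
end

section
/- Let e₁, e₂, e₃ be pairwise distinct rational numbers and let W be the elliptic curve over ℚ with affine equation y² = (x−e₁)(x−e₂)(x−e₃). Fix i ∈ {1,2,3}. Let P₁ = (u₁, v₁) and P₂ = (u₂, v₂) be affine rational points of W such that their sum P₁ + P₂ in the group law of W is an affine point (u₃, v₃), and suppose u₁ ≠ eᵢ, u₂ ≠ eᵢ and u₃ ≠ eᵢ. Then the product (u₁ − eᵢ)·(u₂ − eᵢ)·(u₃ − eᵢ) is the square of a nonzero rational number. -/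
open WeierstrassCurve

/-- Multiplicativity modulo squares of the descent map `φᵢ(P) = x(P) − eᵢ` on the
elliptic curve `y² = (x−e₁)(x−e₂)(x−e₃)`: if `P₁ + P₂ = P₃` are affine points with
`x`-coordinates `u₁, u₂, u₃` all different from `eᵢ`, then
`(u₁−eᵢ)(u₂−eᵢ)(u₃−eᵢ)` is a nonzero rational square. -/
theorem descent_map_multiplicative (e₁ e₂ e₃ : ℚ)
    (h12 : e₁ ≠ e₂) (h13 : e₁ ≠ e₃) (h23 : e₂ ≠ e₃)
    (W : WeierstrassCurve.Affine ℚ)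
    (hW : W = { a₁ := 0, a₂ := -(e₁ + e₂ + e₃), a₃ := 0,
                a₄ := e₁ * e₂ + e₁ * e₃ + e₂ * e₃, a₆ := -(e₁ * e₂ * e₃) })
    (e : ℚ) (he : e = e₁ ∨ e = e₂ ∨ e = e₃)
    (u₁ v₁ u₂ v₂ u₃ v₃ : ℚ)
    (h₁ : W.Nonsingular u₁ v₁) (h₂ : W.Nonsingular u₂ v₂) (h₃ : W.Nonsingular u₃ v₃)
    (hadd : Affine.Point.some _ _ h₁ + Affine.Point.some _ _ h₂ = Affine.Point.some _ _ h₃)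
    (hu₁ : u₁ ≠ e) (hu₂ : u₂ ≠ e) (hu₃ : u₃ ≠ e) :
    ∃ r : ℚ, r ≠ 0 ∧ (u₁ - e) * (u₂ - e) * (u₃ - e) = r ^ 2 := by
  by_cases hxy : u₁ = u₂ ∧ v₁ = W.negY u₂ v₂
  · rw [Affine.Point.add_of_Y_eq hxy.1 hxy.2] at hadd
    exact absurd hadd.symm (Affine.Point.some_ne_zero h₃)
  · have hxy' : u₁ = u₂ → v₁ ≠ W.negY u₂ v₂ := fun hx hy => hxy ⟨hx, hy⟩
    rw [Affine.Point.add_some hxy] at hadd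
    injection hadd with hx3 hy3
    -- hx3 : W.addX u₁ u₂ (W.slope u₁ u₂ v₁ v₂) = u₃
    set L := W.slope u₁ u₂ v₁ v₂ with hLdef
    have key := congrArg (Polynomial.eval e) (W.addPolynomial_slope h₁.1 h₂.1 hxy)
    rw [Affine.addPolynomial, Affine.polynomial, Affine.linePolynomial] at key
    simp only [Polynomial.eval_add, Polynomial.eval_sub, Polynomial.eval_mul,
      Polynomial.eval_pow, Polynomial.eval_C, Polynomial.eval_X, Polynomial.eval_neg] at key
    rw [hx3] at key
    have hroot : e ^ 3 + W.a₂ * e ^ 2 + W.a₄ * e + W.a₆ = 0 := by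
      subst hW
      rcases he with rfl | rfl | rfl <;> simp <;> ring
    have ha₁ : W.a₁ = 0 := by rw [hW]
    have ha₃ : W.a₃ = 0 := by rw [hW]
    rw [ha₁, ha₃, hroot] at key
    have hsq : (u₁ - e) * (u₂ - e) * (u₃ - e) = (L * (e - u₁) + v₁) ^ 2 := by
      linear_combination -key
    refine ⟨L * (e - u₁) + v₁, ?_, hsq⟩
    intro h0
    have hne : (u₁ - e) * (u₂ - e) * (u₃ - e) ≠ 0 :=
      mul_ne_zero (mul_ne_zero (sub_ne_zero_of_ne hu₁) (sub_ne_zero_of_ne hu₂))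
        (sub_ne_zero_of_ne hu₃)
    rw [hsq, h0] at hne
    simp at hne
end

section
/- Let e₁, e₂, e₃ be pairwise distinct rational numbers and let W be the elliptic curve over ℚ with affine equation y² = (x−e₁)(x−e₂)(x−e₃). Let Q be a rational point of W such that P = 2·Q (doubling in the group law of W) is an affine point (u, v). Then for each i ∈ {1,2,3}, the number u − eᵢ is the square of a rational number. -/
open WeierstrassCurve

private lemma key_identity (e f g x y u L : ℚ) (hy : y ≠ 0)
    (heq : y ^ 2 = x ^ 3 - (e + f + g) * x ^ 2 + (e * f + e * g + f * g) * x - e * f * g)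
    (hL : L * (2 * y) = 3 * x ^ 2 - 2 * (e + f + g) * x + (e * f + e * g + f * g))
    (hu : u = L ^ 2 + (e + f + g) - 2 * x) :
    ∃ r : ℚ, u - e = r ^ 2 := by
  have h2y : (2 * y) ≠ 0 := by positivity
  refine ⟨(x ^ 2 - 2 * e * x + (e * f + e * g - f * g)) / (2 * y), ?_⟩
  rw [div_pow, eq_div_iff (by positivity)]
  linear_combination (L * (2 * y) + (3 * x ^ 2 - 2 * (e + f + g) * x
      + (e * f + e * g + f * g))) * hL + (2 * y) ^ 2 * hu
      + (4 * (f + g - 2 * x)) * heq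

/-- Points in `2·W(ℚ)` lie in the kernel of each descent map
`φᵢ(P) = x(P) − eᵢ ∈ ℚ*/(ℚ*)²` on the elliptic curve `y² = (x−e₁)(x−e₂)(x−e₃)`:
if `P = 2·Q` is an affine point `(u, v)`, then each `u − eᵢ` is a rational
square. -/
theorem double_point_coordinates_are_squares (e₁ e₂ e₃ : ℚ)
    (h12 : e₁ ≠ e₂) (h13 : e₁ ≠ e₃) (h23 : e₂ ≠ e₃)
    (W : WeierstrassCurve.Affine ℚ)
    (hW : W = { a₁ := 0, a₂ := -(e₁ + e₂ + e₃), a₃ := 0,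
                a₄ := e₁ * e₂ + e₁ * e₃ + e₂ * e₃, a₆ := -(e₁ * e₂ * e₃) })
    (Q : W.Point) (u v : ℚ) (h : W.Nonsingular u v)
    (hdouble : 2 • Q = Affine.Point.some u v h) :
    ∀ e : ℚ, e = e₁ ∨ e = e₂ ∨ e = e₃ → ∃ r : ℚ, u - e = r ^ 2 := by
  intro e he
  rw [two_nsmul] at hdouble
  cases Q with
  | zero =>
    rw [← Affine.Point.zero_def, add_zero] at hdouble
    exact (Affine.Point.some_ne_zero h hdouble.symm).elim
  | @some x y hQ =>
    by_cases hy : y = W.negY x y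
    · rw [Affine.Point.add_self_of_Y_eq hy] at hdouble
      exact (Affine.Point.some_ne_zero h hdouble.symm).elim
    · rw [Affine.Point.add_self_of_Y_ne hy] at hdouble
      injection hdouble with hx hyv
      -- hx : W.addX x x (W.slope x x y y) = u
      have hnegY : W.negY x y = -y := by
        rw [Affine.negY, hW]; ring
      have hy0 : y ≠ 0 := by
        intro h0
        apply hy
        rw [hnegY, h0, neg_zero]
      have heq : y ^ 2 = x ^ 3 - (e₁ + e₂ + e₃) * x ^ 2
          + (e₁ * e₂ + e₁ * e₃ + e₂ * e₃) * x - e₁ * e₂ * e₃ := by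
        have := ((W.equation_iff x y).mp hQ.1)
        rw [hW] at this
        simp only at this
        linarith [this]
      have hL : W.slope x x y y * (2 * y)
          = 3 * x ^ 2 - 2 * (e₁ + e₂ + e₃) * x + (e₁ * e₂ + e₁ * e₃ + e₂ * e₃) := by
        rw [Affine.slope_of_Y_ne rfl hy, hnegY, hW]
        simp only
        have h2y : y - -y = 2 * y := by ring
        rw [h2y, div_mul_cancel₀ _ (mul_ne_zero two_ne_zero hy0)]
        ring
      have hu : u = W.slope x x y y ^ 2 + (e₁ + e₂ + e₃) - 2 * x := by
        rw [← hx, Affine.addX, hW]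
        simp only
        ring
      rcases he with h' | h' | h' <;> rw [h']
      · exact key_identity e₁ e₂ e₃ x y u _ hy0 heq hL hu
      · refine key_identity e₂ e₁ e₃ x y u (W.slope x x y y) hy0 ?_ ?_ ?_ <;>
          [linear_combination heq; linear_combination hL; linear_combination hu]
      · refine key_identity e₃ e₁ e₂ x y u (W.slope x x y y) hy0 ?_ ?_ ?_ <;>
          [linear_combination heq; linear_combination hL; linear_combination hu]
end

section
/- Let e₁, e₂, e₃ be pairwise distinct rational numbers and let W be the elliptic curve over ℚ with affine equation y² = (x−e₁)(x−e₂)(x−e₃). Let P = (u, v) be an affine rational point of W such that u − e₁, u − e₂ and u − e₃ are each squares of rational numbers. Then there exists a rational point Q of W with P = 2·Q in the group law of W. -/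
open WeierstrassCurve

private lemma some_eq_some_aux {W : WeierstrassCurve.Affine ℚ} {x₁ y₁ x₂ y₂ : ℚ}
    (h₁ : W.Nonsingular x₁ y₁) (h₂ : W.Nonsingular x₂ y₂) (hx : x₁ = x₂) (hy : y₁ = y₂) :
    Affine.Point.some x₁ y₁ h₁ = Affine.Point.some x₂ y₂ h₂ := by
  subst hx hy; rfl

private lemma half_x (L D N A₂ X u : ℚ) (hD : D ≠ 0) (hL : L * D = N)
    (hkey : N ^ 2 = D ^ 2 * (A₂ + 2 * X + u)) :
    L ^ 2 + 0 * L - A₂ - X - X = u := by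
  have key : D ^ 2 * (L ^ 2 + 0 * L - A₂ - X - X - u) = 0 := by
    linear_combination (L * D + N) * hL + hkey
  have hE := (mul_eq_zero.mp key).resolve_left (pow_ne_zero 2 hD)
  linear_combination hE

private lemma half_y (L D N A₂ X Y v : ℚ) (hD : D ≠ 0) (hL : L * D = N)
    (hkey : -N ^ 3 + (A₂ + 3 * X) * D ^ 2 * N + (-Y - v) * D ^ 3 = 0) :
    -(L * (L ^ 2 + 0 * L - A₂ - X - X - X) + Y)
      - 0 * (L ^ 2 + 0 * L - A₂ - X - X) - 0 = v := by
  have key : D ^ 3 * (-(L * (L ^ 2 + 0 * L - A₂ - X - X - X) + Y) - v) = 0 := by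
    linear_combination (-(D * L) ^ 2 - N * (D * L) - N ^ 2 + (A₂ + 3 * X) * D ^ 2) * hL + hkey
  have hE := (mul_eq_zero.mp key).resolve_left (pow_ne_zero 3 hD)
  linear_combination hE

/-- Key step of the two-descent on the elliptic curve `y² = (x−e₁)(x−e₂)(x−e₃)`:
an affine rational point `(u, v)` such that `u − e₁`, `u − e₂` and `u − e₃` are
all rational squares is divisible by `2` in the Mordell–Weil group. -/
theorem square_coordinates_implies_divisible_by_two (e₁ e₂ e₃ : ℚ)
    (h12 : e₁ ≠ e₂) (h13 : e₁ ≠ e₃) (h23 : e₂ ≠ e₃)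
    (W : WeierstrassCurve.Affine ℚ)
    (hW : W = { a₁ := 0, a₂ := -(e₁ + e₂ + e₃), a₃ := 0,
                a₄ := e₁ * e₂ + e₁ * e₃ + e₂ * e₃, a₆ := -(e₁ * e₂ * e₃) })
    (u v : ℚ) (h : W.Nonsingular u v)
    (hsq₁ : ∃ r : ℚ, u - e₁ = r ^ 2)
    (hsq₂ : ∃ r : ℚ, u - e₂ = r ^ 2)
    (hsq₃ : ∃ r : ℚ, u - e₃ = r ^ 2) :
    ∃ Q : W.Point, 2 • Q = Affine.Point.some u v h := by
  subst hW
  obtain ⟨r₁, h1⟩ := hsq₁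
  obtain ⟨r₂, h2⟩ := hsq₂
  obtain ⟨r₃, h3⟩ := hsq₃
  -- the equation satisfied by (u, v)
  have heq : v ^ 2 = (u - e₁) * (u - e₂) * (u - e₃) := by
    have := ((Affine.equation_iff u v).mp h.1)
    simp only at this
    linear_combination this
  have hv2 : v ^ 2 = (r₁ * r₂ * r₃) ^ 2 := by
    rw [heq, h1, h2, h3]; ring
  -- choose the sign of r₁ so that v = r₁ r₂ r₃
  obtain ⟨s₁, hs1, hv⟩ : ∃ s₁ : ℚ, u - e₁ = s₁ ^ 2 ∧ v = s₁ * r₂ * r₃ := by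
    rcases sq_eq_sq_iff_eq_or_eq_neg.mp hv2 with hv | hv
    · exact ⟨r₁, h1, hv⟩
    · exact ⟨-r₁, by rw [h1]; ring, by rw [hv]; ring⟩
  clear h1 hv2 heq
  -- rename and eliminate variables
  have he₁ : e₁ = u - s₁ ^ 2 := by linarith
  have he₂ : e₂ = u - r₂ ^ 2 := by linarith
  have he₃ : e₃ = u - r₃ ^ 2 := by linarith
  subst he₁ he₂ he₃ hv
  -- pairwise non-degeneracy of the square roots
  have hne12 : s₁ + r₂ ≠ 0 := by
    intro hc
    apply h12
    have hh : s₁ = -r₂ := by linarith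
    rw [hh]; ring
  have hne13 : s₁ + r₃ ≠ 0 := by
    intro hc
    apply h13
    have hh : s₁ = -r₃ := by linarith
    rw [hh]; ring
  have hne23 : r₂ + r₃ ≠ 0 := by
    intro hc
    apply h23
    have hh : r₂ = -r₃ := by linarith
    rw [hh]; ring
  let W : WeierstrassCurve.Affine ℚ :=
    { a₁ := 0, a₂ := -((u - s₁ ^ 2) + (u - r₂ ^ 2) + (u - r₃ ^ 2)), a₃ := 0,
      a₄ := (u - s₁ ^ 2) * (u - r₂ ^ 2) + (u - s₁ ^ 2) * (u - r₃ ^ 2)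
        + (u - r₂ ^ 2) * (u - r₃ ^ 2),
      a₆ := -((u - s₁ ^ 2) * (u - r₂ ^ 2) * (u - r₃ ^ 2)) }
  have ha1 : W.a₁ = 0 := rfl
  have ha2 : W.a₂ = -((u - s₁ ^ 2) + (u - r₂ ^ 2) + (u - r₃ ^ 2)) := rfl
  have ha3 : W.a₃ = 0 := rfl
  have ha4 : W.a₄ = (u - s₁ ^ 2) * (u - r₂ ^ 2) + (u - s₁ ^ 2) * (u - r₃ ^ 2)
      + (u - r₂ ^ 2) * (u - r₃ ^ 2) := rfl
  have ha6 : W.a₆ = -((u - s₁ ^ 2) * (u - r₂ ^ 2) * (u - r₃ ^ 2)) := rfl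
  -- the half point, kept opaque
  obtain ⟨x', hx'd⟩ : ∃ x' : ℚ, x' = u + s₁ * r₂ + s₁ * r₃ + r₂ * r₃ := ⟨_, rfl⟩
  obtain ⟨y', hy'd⟩ : ∃ y' : ℚ, y' = (s₁ + r₂) * (s₁ + r₃) * (r₂ + r₃) := ⟨_, rfl⟩
  have hy'ne : y' ≠ 0 := by
    rw [hy'd]; exact mul_ne_zero (mul_ne_zero hne12 hne13) hne23
  have hQ : W.Nonsingular x' y' := by
    rw [Affine.nonsingular_iff, Affine.equation_iff]
    constructor
    · rw [ha1, ha2, ha3, ha4, ha6, hx'd, hy'd]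
      ring
    · right
      rw [ha1, ha3]
      intro hc
      apply hy'ne
      linarith
  have hyne : y' ≠ W.negY x' y' := by
    simp only [Affine.negY]
    intro hc
    apply hy'ne
    linarith
  -- the slope of the tangent line at the half point
  have hL2 : W.slope x' x' y' y' * (2 * y') = 3 * x' ^ 2
      + 2 * (-(u - s₁ ^ 2 + (u - r₂ ^ 2) + (u - r₃ ^ 2))) * x'
      + ((u - s₁ ^ 2) * (u - r₂ ^ 2) + (u - s₁ ^ 2) * (u - r₃ ^ 2)
        + (u - r₂ ^ 2) * (u - r₃ ^ 2)) := by
    rw [Affine.slope_of_Y_ne rfl hyne]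
    simp only [Affine.negY]
    have hden : y' - (-y' - 0 * x' - 0) ≠ 0 := by
      intro hc; apply hy'ne; linarith
    rw [div_mul_eq_mul_div, div_eq_iff hden]
    ring
  have hD : (2 : ℚ) * y' ≠ 0 := mul_ne_zero two_ne_zero hy'ne
  refine ⟨Affine.Point.some x' y' hQ, ?_⟩
  rw [two_smul, Affine.Point.add_self_of_Y_ne hyne]
  apply some_eq_some_aux
  · -- x-coordinate of 2Q is u
    simp only [Affine.addX]
    have hh := half_x (W.slope x' x' y' y')
      (2 * y')
      (3 * x' ^ 2
        + 2 * (-(u - s₁ ^ 2 + (u - r₂ ^ 2) + (u - r₃ ^ 2))) * x'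
        + ((u - s₁ ^ 2) * (u - r₂ ^ 2) + (u - s₁ ^ 2) * (u - r₃ ^ 2)
          + (u - r₂ ^ 2) * (u - r₃ ^ 2)))
      (-(u - s₁ ^ 2 + (u - r₂ ^ 2) + (u - r₃ ^ 2)))
      x' u hD hL2 (by rw [hx'd, hy'd]; ring)
    linear_combination hh
  · -- y-coordinate of 2Q is v
    simp only [Affine.addY, Affine.negAddY, Affine.addX, Affine.negY]
    have hh := half_y (W.slope x' x' y' y')
      (2 * y')
      (3 * x' ^ 2
        + 2 * (-(u - s₁ ^ 2 + (u - r₂ ^ 2) + (u - r₃ ^ 2))) * x'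
        + ((u - s₁ ^ 2) * (u - r₂ ^ 2) + (u - s₁ ^ 2) * (u - r₃ ^ 2)
          + (u - r₂ ^ 2) * (u - r₃ ^ 2)))
      (-(u - s₁ ^ 2 + (u - r₂ ^ 2) + (u - r₃ ^ 2)))
      x' y' (s₁ * r₂ * r₃) hD hL2 (by rw [hx'd, hy'd]; ring)
    linear_combination hh
end

section
/- Let e₁, e₂, e₃ be pairwise distinct rational numbers, b₁, b₂ nonzero rational numbers, and let (u, v) be an affine rational point on the curve y² = (x−e₁)(x−e₂)(x−e₃) with u ≠ e₁ and u ≠ e₂. Suppose the system b₁X₁² − b₂X₂² + (e₁−e₂)X₀² = 0, b₁X₁² − b₁b₂X₃² + (e₁−e₃)X₀² = 0 has a rational solution (x₀, x₁, x₂, x₃) ≠ (0,0,0,0). Then the system c₁X₁² − c₂X₂² + (e₁−e₂)X₀² = 0, c₁X₁² − c₁c₂X₃² + (e₁−e₃)X₀² = 0, with c₁ = b₁·(u−e₁) and c₂ = b₂·(u−e₂), also has a rational solution (x₀', x₁', x₂', x₃') ≠ (0,0,0,0). -/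
/-- P-equivalence of homogeneous spaces: twisting the parameters `(b₁, b₂)` of
the homogeneous space `Q_{e₁,e₂,e₃,b₁,b₂}` by the value
`φ(P) = (x(P)−e₁, x(P)−e₂)` of the descent map at a rational point `P = (u, v)`
of the elliptic curve `y² = (x−e₁)(x−e₂)(x−e₃)` preserves the existence of
nontrivial rational points. -/
theorem homogeneous_space_twist_by_point (e₁ e₂ e₃ : ℚ)
    (h12 : e₁ ≠ e₂) (h13 : e₁ ≠ e₃) (h23 : e₂ ≠ e₃)
    (b₁ b₂ : ℚ) (hb₁ : b₁ ≠ 0) (hb₂ : b₂ ≠ 0)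
    (u v : ℚ) (huv : v ^ 2 = (u - e₁) * (u - e₂) * (u - e₃))
    (hu₁ : u ≠ e₁) (hu₂ : u ≠ e₂)
    (hsol : ∃ x₀ x₁ x₂ x₃ : ℚ, (x₀, x₁, x₂, x₃) ≠ (0, 0, 0, 0) ∧
      b₁ * x₁ ^ 2 - b₂ * x₂ ^ 2 + (e₁ - e₂) * x₀ ^ 2 = 0 ∧
      b₁ * x₁ ^ 2 - b₁ * b₂ * x₃ ^ 2 + (e₁ - e₃) * x₀ ^ 2 = 0) :
    ∃ x₀' x₁' x₂' x₃' : ℚ, (x₀', x₁', x₂', x₃') ≠ (0, 0, 0, 0) ∧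
      (b₁ * (u - e₁)) * x₁' ^ 2 - (b₂ * (u - e₂)) * x₂' ^ 2 + (e₁ - e₂) * x₀' ^ 2 = 0 ∧
      (b₁ * (u - e₁)) * x₁' ^ 2 - (b₁ * (u - e₁)) * (b₂ * (u - e₂)) * x₃' ^ 2 +
        (e₁ - e₃) * x₀' ^ 2 = 0 := by
  obtain ⟨x₀, x₁, x₂, x₃, hne, E1, E2⟩ := hsol
  have hue1 : u - e₁ ≠ 0 := sub_ne_zero.mpr hu₁
  have hue2 : u - e₂ ≠ 0 := sub_ne_zero.mpr hu₂
  by_cases hx0 : x₀ = 0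
  · -- the original point has x₀ = 0 : then b₁ and b₂ are both squares
    subst hx0
    have h1 : b₁ * x₁ ^ 2 = b₂ * x₂ ^ 2 := by linear_combination E1
    have h2 : b₁ * x₁ ^ 2 = b₁ * b₂ * x₃ ^ 2 := by linear_combination E2
    have hx3 : x₃ ≠ 0 := by
      intro h
      apply hne
      have hx1 : x₁ = 0 := by
        have : b₁ * x₁ ^ 2 = 0 := by rw [h2, h]; ring
        have := (mul_eq_zero.1 this).resolve_left hb₁
        exact pow_eq_zero_iff (n := 2) (by norm_num) |>.1 this
      have hx2 : x₂ = 0 := by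
        have : b₂ * x₂ ^ 2 = 0 := by rw [← h1, hx1]; ring
        have := (mul_eq_zero.1 this).resolve_left hb₂
        exact pow_eq_zero_iff (n := 2) (by norm_num) |>.1 this
      rw [hx1, hx2, h]
    have h2' : x₁ ^ 2 = b₂ * x₃ ^ 2 :=
      mul_left_cancel₀ hb₁ (by linear_combination h2)
    have hx1 : x₁ ≠ 0 := by
      intro h
      apply hb₂
      have : b₂ * x₃ ^ 2 = 0 := by rw [← h2', h]; ring
      rcases mul_eq_zero.1 this with h' | h'
      · exact h'
      · exact absurd (pow_eq_zero_iff (n := 2) (by norm_num) |>.1 h') hx3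
    have hx2 : x₂ ≠ 0 := by
      intro h
      apply hx1
      have : b₁ * x₁ ^ 2 = 0 := by rw [h1, h]; ring
      have := (mul_eq_zero.1 this).resolve_left hb₁
      exact pow_eq_zero_iff (n := 2) (by norm_num) |>.1 this
    set p := x₂ / x₃ with hpd
    set q := x₁ / x₃ with hqd
    have hp : p ≠ 0 := div_ne_zero hx2 hx3
    have hq : q ≠ 0 := div_ne_zero hx1 hx3
    have hb2x : b₂ = q ^ 2 := by
      rw [hqd]
      field_simp
      linear_combination -h2'
    have hb1x : b₁ = p ^ 2 := by
      have key2 : b₁ * x₃ ^ 2 = x₂ ^ 2 :=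
        mul_right_cancel₀ (pow_ne_zero 2 hx1)
          (by linear_combination x₃ ^ 2 * h1 - x₂ ^ 2 * h2')
      rw [hpd]
      field_simp
      linear_combination key2
    refine ⟨p * q * (u - e₁) * (u - e₂), q * (u - e₁) * (u - e₂),
        p * (u - e₁) * (u - e₂), v, ?_, ?_, ?_⟩
    · intro h
      injection h with h' _
      exact (mul_ne_zero (mul_ne_zero (mul_ne_zero hp hq) hue1) hue2) h'
    · linear_combination (u^5*q^2 + (-2)*e₂*u^4*q^2 + e₂^2*u^3*q^2 + (-3)*e₁*u^4*q^2 + 6*e₁*e₂*u^3*q^2 + (-3)*e₁*e₂^2*u^2*q^2 + 3*e₁^2*u^3*q^2 + (-6)*e₁^2*e₂*u^2*q^2 + 3*e₁^2*e₂^2*u*q^2 + (-1)*e₁^3*u^2*q^2 + 2*e₁^3*e₂*u*q^2 + (-1)*e₁^3*e₂^2*q^2) * hb1x +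
      ((-1)*u^5*p^2 + 3*e₂*u^4*p^2 + (-3)*e₂^2*u^3*p^2 + e₂^3*u^2*p^2 + 2*e₁*u^4*p^2 + (-6)*e₁*e₂*u^3*p^2 + 6*e₁*e₂^2*u^2*p^2 + (-2)*e₁*e₂^3*u*p^2 + (-1)*e₁^2*u^3*p^2 + 3*e₁^2*e₂*u^2*p^2 + (-3)*e₁^2*e₂^2*u*p^2 + e₁^2*e₂^3*p^2) * hb2x
    · linear_combination (u^5*q^2 + (-1)*b₂*u^2*v^2 + (-2)*e₂*u^4*q^2 + e₂*b₂*u*v^2 + e₂^2*u^3*q^2 + (-3)*e₁*u^4*q^2 + e₁*b₂*u*v^2 + 6*e₁*e₂*u^3*q^2 + (-1)*e₁*e₂*b₂*v^2 + (-3)*e₁*e₂^2*u^2*q^2 + 3*e₁^2*u^3*q^2 + (-6)*e₁^2*e₂*u^2*q^2 + 3*e₁^2*e₂^2*u*q^2 + (-1)*e₁^3*u^2*q^2 + 2*e₁^3*e₂*u*q^2 + (-1)*e₁^3*e₂^2*q^2) * hb1x +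
      ((-1)*u^2*v^2*p^2 + e₂*u*v^2*p^2 + e₁*u*v^2*p^2 + (-1)*e₁*e₂*v^2*p^2) * hb2x +
      ((-1)*u^2*p^2*q^2 + e₂*u*p^2*q^2 + e₁*u*p^2*q^2 + (-1)*e₁*e₂*p^2*q^2) * huv
  · -- x₀ ≠ 0 : pass to affine coordinates t_i = x_i / x₀
    set t1 := x₁ / x₀ with ht1d
    set t2 := x₂ / x₀ with ht2d
    set t3 := x₃ / x₀ with ht3d
    have he2 : e₂ = e₁ + b₁ * t1 ^ 2 - b₂ * t2 ^ 2 := by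
      rw [ht1d, ht2d]
      field_simp
      linear_combination -E1
    have he3 : e₃ = e₁ + b₁ * t1 ^ 2 - b₁ * b₂ * t3 ^ 2 := by
      rw [ht1d, ht3d]
      field_simp
      linear_combination -E2
    subst he2
    subst he3
    by_cases hxu0 : e₁ + b₁ * t1 ^ 2 = u
    · -- x(Q) = x(P) : both twisted parameters are squares
      have hxu : u = e₁ + b₁ * t1 ^ 2 := hxu0.symm
      have h22 : b₂ * t2 ^ 2 ≠ 0 := by
        intro h
        apply hu₂
        rw [hxu]
        linarith
      have ht2 : t2 ≠ 0 := by
        intro h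
        apply h22
        rw [h]
        ring
      refine ⟨0, b₂ * t2, b₁ * t1, 1, ?_, ?_, ?_⟩
      · intro h
        injection h with _ h'
        injection h' with h'' _
        exact (mul_ne_zero hb₂ ht2) h''
      · linear_combination (b₁*b₂^2*t2^2 + (-1)*b₁^2*b₂*t1^2) * hxu
      · linear_combination ((-1)*b₁*b₂*u + e₁*b₁*b₂) * hxu
    · by_cases hv0 : v = 0
      · -- v = 0 : P is the 2-torsion point (e₃, 0)
        have hprod : (u - e₁) * (u - (e₁ + b₁ * t1 ^ 2 - b₂ * t2 ^ 2)) * (u - (e₁ + b₁ * t1 ^ 2 - b₁ * b₂ * t3 ^ 2)) = 0 := by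
          rw [← huv, hv0]; ring
        have hu3 : u = (e₁ + b₁ * t1 ^ 2 - b₁ * b₂ * t3 ^ 2) := by
          rcases mul_eq_zero.1 hprod with h | h
          · rcases mul_eq_zero.1 h with h' | h'
            · exact absurd (sub_eq_zero.1 h') hu₁
            · exact absurd (sub_eq_zero.1 h') hu₂
          · exact sub_eq_zero.1 h
        have ht3 : t3 ≠ 0 := by
          intro h
          apply hxu0
          rw [hu3, h]
          ring
        refine ⟨t3 * b₁ * (u - e₁) * b₂ * (u - (e₁ + b₁ * t1 ^ 2 - b₂ * t2 ^ 2)),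
            (b₁ * t1 ^ 2 - b₁ * b₂ * t3 ^ 2) * t2 * b₂ * (u - (e₁ + b₁ * t1 ^ 2 - b₂ * t2 ^ 2)),
            (b₂ * t2 ^ 2 - b₁ * b₂ * t3 ^ 2) * t1 * b₁ * (u - e₁),
            (b₁ * t1 ^ 2 - b₁ * b₂ * t3 ^ 2) * (b₂ * t2 ^ 2 - b₁ * b₂ * t3 ^ 2),
            ?_, ?_, ?_⟩
        · intro h
          injection h with h' _
          exact (mul_ne_zero (mul_ne_zero (mul_ne_zero (mul_ne_zero ht3 hb₁) hue1) hb₂)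
            (sub_ne_zero.mpr hu₂)) h'
        · linear_combination ((-1)*b₁^2*b₂^3*u^2*t1^2*t2^4 + b₁^2*b₂^3*u^3*t2^2*t3^2 + (-1)*b₁^2*b₂^4*u*t1^2*t2^6 + 2*b₁^2*b₂^4*u^2*t2^4*t3^2 + b₁^2*b₂^5*u*t2^6*t3^2 + b₁^3*b₂^2*u^2*t1^4*t2^2 + (-1)*b₁^3*b₂^2*u^3*t1^2*t3^2 + 2*b₁^3*b₂^3*u*t1^4*t2^4 + (-3)*b₁^3*b₂^3*u^2*t1^2*t2^2*t3^2 + (-2)*b₁^3*b₂^4*u*t1^2*t2^4*t3^2 + (-1)*b₁^4*b₂^2*u*t1^6*t2^2 + b₁^4*b₂^2*u^2*t1^4*t3^2 + b₁^4*b₂^3*u*t1^4*t2^2*t3^2 + 2*e₁*b₁^2*b₂^3*u*t1^2*t2^4 + (-3)*e₁*b₁^2*b₂^3*u^2*t2^2*t3^2 + e₁*b₁^2*b₂^4*t1^2*t2^6 + (-4)*e₁*b₁^2*b₂^4*u*t2^4*t3^2 + (-1)*e₁*b₁^2*b₂^5*t2^6*t3^2 + (-2)*e₁*b₁^3*b₂^2*u*t1^4*t2^2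 + 3*e₁*b₁^3*b₂^2*u^2*t1^2*t3^2 + (-2)*e₁*b₁^3*b₂^3*t1^4*t2^4 + 6*e₁*b₁^3*b₂^3*u*t1^2*t2^2*t3^2 + 2*e₁*b₁^3*b₂^4*t1^2*t2^4*t3^2 + e₁*b₁^4*b₂^2*t1^6*t2^2 + (-2)*e₁*b₁^4*b₂^2*u*t1^4*t3^2 + (-1)*e₁*b₁^4*b₂^3*t1^4*t2^2*t3^2 + (-1)*e₁^2*b₁^2*b₂^3*t1^2*t2^4 + 3*e₁^2*b₁^2*b₂^3*u*t2^2*t3^2 + 2*e₁^2*b₁^2*b₂^4*t2^4*t3^2 + e₁^2*b₁^3*b₂^2*t1^4*t2^2 + (-3)*e₁^2*b₁^3*b₂^2*u*t1^2*t3^2 + (-3)*e₁^2*b₁^3*b₂^3*t1^2*t2^2*t3^2 + e₁^2*b₁^4*b₂^2*t1^4*t3^2 + (-1)*e₁^3*b₁^2*b₂^3*t2^2*t3^2 + e₁^3*b₁^3*b₂^2*t1^2*t3^2) * hu3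
        · linear_combination (b₁^3*b₂^2*u^2*t1^4*t2^2 + (-1)*b₁^3*b₂^2*u^3*t1^2*t3^2 + b₁^3*b₂^3*u*t1^4*t2^4 + (-4)*b₁^3*b₂^3*u^2*t1^2*t2^2*t3^2 + b₁^3*b₂^3*u^3*t3^4 + (-3)*b₁^3*b₂^4*u*t1^2*t2^4*t3^2 + 3*b₁^3*b₂^4*u^2*t2^2*t3^4 + 2*b₁^3*b₂^5*u*t2^4*t3^4 + (-1)*b₁^4*b₂^2*u*t1^6*t2^2 + b₁^4*b₂^2*u^2*t1^4*t3^2 + 3*b₁^4*b₂^3*u*t1^4*t2^2*t3^2 + (-1)*b₁^4*b₂^4*u*t1^2*t2^2*t3^4 + (-1)*b₁^4*b₂^4*u^2*t3^6 + (-1)*b₁^4*b₂^5*u*t2^2*t3^6 + (-1)*b₁^5*b₂^3*u*t1^4*t3^4 + b₁^5*b₂^4*u*t1^2*t3^6 + (-2)*e₁*b₁^3*b₂^2*u*t1^4*t2^2 + 3*e₁*b₁^3*b₂^2*u^2*t1^2*t3^2 + (-1)*e₁*b₁^3*b₂^3*t1^4*t2^4 + 8*e₁*b₁^3*b₂^3*u*t1^2*t2^2*t3^2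 + (-3)*e₁*b₁^3*b₂^3*u^2*t3^4 + 3*e₁*b₁^3*b₂^4*t1^2*t2^4*t3^2 + (-6)*e₁*b₁^3*b₂^4*u*t2^2*t3^4 + (-2)*e₁*b₁^3*b₂^5*t2^4*t3^4 + e₁*b₁^4*b₂^2*t1^6*t2^2 + (-2)*e₁*b₁^4*b₂^2*u*t1^4*t3^2 + (-3)*e₁*b₁^4*b₂^3*t1^4*t2^2*t3^2 + e₁*b₁^4*b₂^4*t1^2*t2^2*t3^4 + 2*e₁*b₁^4*b₂^4*u*t3^6 + e₁*b₁^4*b₂^5*t2^2*t3^6 + e₁*b₁^5*b₂^3*t1^4*t3^4 + (-1)*e₁*b₁^5*b₂^4*t1^2*t3^6 + e₁^2*b₁^3*b₂^2*t1^4*t2^2 + (-3)*e₁^2*b₁^3*b₂^2*u*t1^2*t3^2 + (-4)*e₁^2*b₁^3*b₂^3*t1^2*t2^2*t3^2 + 3*e₁^2*b₁^3*b₂^3*u*t3^4 + 3*e₁^2*b₁^3*b₂^4*t2^2*t3^4 + e₁^2*b₁^4*b₂^2*t1^4*t3^2 + (-1)*e₁^2*b₁^4*b₂^4*t3^6 +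 e₁^3*b₁^3*b₂^2*t1^2*t3^2 + (-1)*e₁^3*b₁^3*b₂^3*t3^4) * hu3
      · -- generic case : translate Q by P using the group law
        have hxu : (e₁ + b₁ * t1 ^ 2) - u ≠ 0 := sub_ne_zero.mpr hxu0
        refine ⟨(u - e₁) * (u - (e₁ + b₁ * t1 ^ 2 - b₂ * t2 ^ 2)) * ((e₁ + b₁ * t1 ^ 2) - u) * v,
            (v * t1 - b₂ * t2 * t3 * (u - e₁)) * (u - (e₁ + b₁ * t1 ^ 2 - b₂ * t2 ^ 2)) * v,
            (v * t2 - b₁ * t1 * t3 * (u - (e₁ + b₁ * t1 ^ 2 - b₂ * t2 ^ 2))) * (u - e₁) * v,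
            (v * t3 - t1 * t2 * (u - (e₁ + b₁ * t1 ^ 2 - b₁ * b₂ * t3 ^ 2))) * (u - e₁) * (u - (e₁ + b₁ * t1 ^ 2 - b₂ * t2 ^ 2)),
            ?_, ?_, ?_⟩
        · intro h
          injection h with h' _
          exact (mul_ne_zero (mul_ne_zero (mul_ne_zero hue1 (sub_ne_zero.mpr hu₂)) hxu) hv0) h'
        · linear_combination ((-1)*b₂*u^3*v^2*t2^2 + (-1)*b₂^2*u^2*v^2*t2^4 + b₁*u^3*v^2*t1^2 + 3*b₁*b₂*u^2*v^2*t1^2*t2^2 + b₁*b₂^2*u*v^2*t1^2*t2^4 + (-2)*b₁^2*u^2*v^2*t1^4 + (-2)*b₁^2*b₂*u*v^2*t1^4*t2^2 + b₁^3*u*v^2*t1^6 + 3*e₁*b₂*u^2*v^2*t2^2 + 2*e₁*b₂^2*u*v^2*t2^4 + (-3)*e₁*b₁*u^2*v^2*t1^2 + (-6)*e₁*b₁*b₂*u*v^2*t1^2*t2^2 + (-1)*e₁*b₁*b₂^2*v^2*t1^2*t2^4 + 4*e₁*b₁^2*u*v^2*t1^4 + 2*e₁*b₁^2*b₂*v^2*t1^4*t2^2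 + (-1)*e₁*b₁^3*v^2*t1^6 + (-3)*e₁^2*b₂*u*v^2*t2^2 + (-1)*e₁^2*b₂^2*v^2*t2^4 + 3*e₁^2*b₁*u*v^2*t1^2 + 3*e₁^2*b₁*b₂*v^2*t1^2*t2^2 + (-2)*e₁^2*b₁^2*v^2*t1^4 + e₁^3*b₂*v^2*t2^2 + (-1)*e₁^3*b₁*v^2*t1^2) * huv
        · linear_combination (b₁*u^3*v^2*t1^2 + 2*b₁*b₂*u^2*v^2*t1^2*t2^2 + (-2)*b₁*b₂*u^4*v*t1*t2*t3 + b₁*b₂*u^5*t1^2*t2^2 + b₁*b₂^2*u*v^2*t1^2*t2^4 + (-4)*b₁*b₂^2*u^3*v*t1*t2^3*t3 + 2*b₁*b₂^2*u^4*t1^2*t2^4 + (-2)*b₁*b₂^3*u^2*v*t1*t2^5*t3 + b₁*b₂^3*u^3*t1^2*t2^6 + (-2)*b₁^2*u^2*v^2*t1^4 + (-2)*b₁^2*b₂*u*v^2*t1^4*t2^2 + 4*b₁^2*b₂*u^3*v*t1^3*t2*t3 + (-3)*b₁^2*b₂*u^4*t1^4*t2^2 + 4*b₁^2*b₂^2*u^2*v*t1^3*t2^3*t3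 + (-4)*b₁^2*b₂^2*u^3*t1^4*t2^4 + b₁^2*b₂^2*u^4*t1^2*t2^2*t3^2 + (-1)*b₁^2*b₂^3*u^2*t1^4*t2^6 + 2*b₁^2*b₂^3*u^3*t1^2*t2^4*t3^2 + b₁^2*b₂^4*u^2*t1^2*t2^6*t3^2 + b₁^3*u*v^2*t1^6 + (-2)*b₁^3*b₂*u^2*v*t1^5*t2*t3 + 3*b₁^3*b₂*u^3*t1^6*t2^2 + 2*b₁^3*b₂^2*u^2*t1^6*t2^4 + (-2)*b₁^3*b₂^2*u^3*t1^4*t2^2*t3^2 + (-2)*b₁^3*b₂^3*u^2*t1^4*t2^4*t3^2 + (-1)*b₁^4*b₂*u^2*t1^8*t2^2 + b₁^4*b₂^2*u^2*t1^6*t2^2*t3^2 + (-3)*e₁*b₁*u^2*v^2*t1^2 + (-4)*e₁*b₁*b₂*u*v^2*t1^2*t2^2 + 8*e₁*b₁*b₂*u^3*v*t1*t2*t3 + (-5)*e₁*b₁*b₂*u^4*t1^2*t2^2 + (-1)*e₁*b₁*b₂^2*v^2*t1^2*t2^4 + 12*e₁*b₁*b₂^2*u^2*v*t1*t2^3*t3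 + (-8)*e₁*b₁*b₂^2*u^3*t1^2*t2^4 + 4*e₁*b₁*b₂^3*u*v*t1*t2^5*t3 + (-3)*e₁*b₁*b₂^3*u^2*t1^2*t2^6 + 4*e₁*b₁^2*u*v^2*t1^4 + 2*e₁*b₁^2*b₂*v^2*t1^4*t2^2 + (-12)*e₁*b₁^2*b₂*u^2*v*t1^3*t2*t3 + 12*e₁*b₁^2*b₂*u^3*t1^4*t2^2 + (-8)*e₁*b₁^2*b₂^2*u*v*t1^3*t2^3*t3 + 12*e₁*b₁^2*b₂^2*u^2*t1^4*t2^4 + (-4)*e₁*b₁^2*b₂^2*u^3*t1^2*t2^2*t3^2 + 2*e₁*b₁^2*b₂^3*u*t1^4*t2^6 + (-6)*e₁*b₁^2*b₂^3*u^2*t1^2*t2^4*t3^2 + (-2)*e₁*b₁^2*b₂^4*u*t1^2*t2^6*t3^2 + (-1)*e₁*b₁^3*v^2*t1^6 + 4*e₁*b₁^3*b₂*u*v*t1^5*t2*t3 + (-9)*e₁*b₁^3*b₂*u^2*t1^6*t2^2 + (-4)*e₁*b₁^3*b₂^2*u*t1^6*t2^4 + 6*e₁*b₁^3*b₂^2*u^2*t1^4*t2^2*t3^2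 + 4*e₁*b₁^3*b₂^3*u*t1^4*t2^4*t3^2 + 2*e₁*b₁^4*b₂*u*t1^8*t2^2 + (-2)*e₁*b₁^4*b₂^2*u*t1^6*t2^2*t3^2 + 3*e₁^2*b₁*u*v^2*t1^2 + 2*e₁^2*b₁*b₂*v^2*t1^2*t2^2 + (-12)*e₁^2*b₁*b₂*u^2*v*t1*t2*t3 + 10*e₁^2*b₁*b₂*u^3*t1^2*t2^2 + (-12)*e₁^2*b₁*b₂^2*u*v*t1*t2^3*t3 + 12*e₁^2*b₁*b₂^2*u^2*t1^2*t2^4 + (-2)*e₁^2*b₁*b₂^3*v*t1*t2^5*t3 + 3*e₁^2*b₁*b₂^3*u*t1^2*t2^6 + (-2)*e₁^2*b₁^2*v^2*t1^4 + 12*e₁^2*b₁^2*b₂*u*v*t1^3*t2*t3 + (-18)*e₁^2*b₁^2*b₂*u^2*t1^4*t2^2 + 4*e₁^2*b₁^2*b₂^2*v*t1^3*t2^3*t3 + (-12)*e₁^2*b₁^2*b₂^2*u*t1^4*t2^4 + 6*e₁^2*b₁^2*b₂^2*u^2*t1^2*t2^2*t3^2 + (-1)*e₁^2*b₁^2*b₂^3*t1^4*t2^6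 + 6*e₁^2*b₁^2*b₂^3*u*t1^2*t2^4*t3^2 + e₁^2*b₁^2*b₂^4*t1^2*t2^6*t3^2 + (-2)*e₁^2*b₁^3*b₂*v*t1^5*t2*t3 + 9*e₁^2*b₁^3*b₂*u*t1^6*t2^2 + 2*e₁^2*b₁^3*b₂^2*t1^6*t2^4 + (-6)*e₁^2*b₁^3*b₂^2*u*t1^4*t2^2*t3^2 + (-2)*e₁^2*b₁^3*b₂^3*t1^4*t2^4*t3^2 + (-1)*e₁^2*b₁^4*b₂*t1^8*t2^2 + e₁^2*b₁^4*b₂^2*t1^6*t2^2*t3^2 + (-1)*e₁^3*b₁*v^2*t1^2 + 8*e₁^3*b₁*b₂*u*v*t1*t2*t3 + (-10)*e₁^3*b₁*b₂*u^2*t1^2*t2^2 + 4*e₁^3*b₁*b₂^2*v*t1*t2^3*t3 + (-8)*e₁^3*b₁*b₂^2*u*t1^2*t2^4 + (-1)*e₁^3*b₁*b₂^3*t1^2*t2^6 + (-4)*e₁^3*b₁^2*b₂*v*t1^3*t2*t3 + 12*e₁^3*b₁^2*b₂*u*t1^4*t2^2 + 4*e₁^3*b₁^2*b₂^2*t1^4*t2^4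 + (-4)*e₁^3*b₁^2*b₂^2*u*t1^2*t2^2*t3^2 + (-2)*e₁^3*b₁^2*b₂^3*t1^2*t2^4*t3^2 + (-3)*e₁^3*b₁^3*b₂*t1^6*t2^2 + 2*e₁^3*b₁^3*b₂^2*t1^4*t2^2*t3^2 + (-2)*e₁^4*b₁*b₂*v*t1*t2*t3 + 5*e₁^4*b₁*b₂*u*t1^2*t2^2 + 2*e₁^4*b₁*b₂^2*t1^2*t2^4 + (-3)*e₁^4*b₁^2*b₂*t1^4*t2^2 + e₁^4*b₁^2*b₂^2*t1^2*t2^2*t3^2 + (-1)*e₁^5*b₁*b₂*t1^2*t2^2) * huv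
end
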